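/- arXiv:2602.19904 — 4 statements merged into one kernel-verified Lean document; each statement's English description precedes it below -/
import Mathlib

section
/- Let S be a left restriction monoid and let S′ = Tot(S)↓ = { s ∈ S : s ≤ t for some total element t } be the set of elements of S lying below a total element in the natural partial order. Then S′ contains 1 and all projections of S, is closed under multiplication and under the operation s ↦ s⁺, and S′ (with the restricted operations) is a factorizable left restriction monoid. -/
/-- A left restriction monoid: a monoid with a unary operation `plus` (written `s⁺` in the
paper) satisfying (LR1)–(LR6). -/
class LeftRestrictionMonoid (S : Type*) extends Monoid S where
  plus : S → S
  lr1 : ∀ s : S, plus (plus s) = plus s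
  lr2 : ∀ s t : S, plus (plus s * plus t) = plus s * plus t
  lr3 : ∀ s t : S, plus s * plus t = plus t * plus s
  lr4 : ∀ s : S, plus s * s = s
  lr5 : ∀ s t : S, plus (s * t) = plus (s * plus t)
  lr6 : ∀ s t : S, s * plus t = plus (s * t) * s

namespace LeftRestrictionMonoid

variable {S : Type*} [LeftRestrictionMonoid S]

/-- The set of projections: elements with `a⁺ = a`. -/
def Proj (S : Type*) [LeftRestrictionMonoid S] : Set S := {a | plus a = a}

/-- The set of total elements: elements with `a⁺ = 1`. -/
def Tot (S : Type*) [LeftRestrictionMonoid S] : Set S := {a | plus a = 1}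

/-- The natural partial order: `s ≤ t` iff `s = s⁺ t`. -/
def nle (s t : S) : Prop := s = plus s * t

end LeftRestrictionMonoid

open LeftRestrictionMonoid

/-- The set of elements lying below some total element in the natural partial order. -/
def LeftRestrictionMonoid.TotDown (S : Type*) [LeftRestrictionMonoid S] : Set S :=
  {s | ∃ t ∈ Tot S, nle s t}

/-!
The natural order is compatible with multiplication: if `a ≤ t` and `b ≤ u`, then (LR6) rewrites
`ab = a⁺t·b⁺u` as `a⁺(tb)⁺·tu`, and anything of the form `e·y` with `e` a projection lies below `y`.
Products of total elements are total by (LR5), and every projection lies below the total element `1`.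
-/

namespace LeftRestrictionMonoid

variable {S : Type*} [LeftRestrictionMonoid S]

theorem plus_mem_proj (a : S) : plus a ∈ Proj S :=
  lr1 a

theorem nle_refl (s : S) : nle s s :=
  (lr4 s).symm

theorem nle_plus_mul (e y : S) : nle (plus e * y) y := by
  have h : plus (plus e * y) = plus e * plus y := by rw [lr5, lr2]
  rw [nle, h, mul_assoc, lr4]

theorem nle_mul {a b t u : S} (hat : nle a t) (hbu : nle b u) : nle (a * b) (t * u) := by
  have hab : a * b = plus (plus a * plus (t * b)) * (t * u) :=
    calc a * b = plus a * (t * plus b) * u := by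
          conv_lhs => rw [hat, hbu]
          simp only [mul_assoc]
      _ = plus a * (plus (t * b) * t) * u := by rw [lr6]
      _ = plus (plus a * plus (t * b)) * (t * u) := by rw [lr2]; simp only [mul_assoc]
  rw [hab]
  exact nle_plus_mul _ _

theorem one_mem_tot : (1 : S) ∈ Tot S := by
  change plus 1 = 1
  simpa using lr4 (1 : S)

theorem mul_mem_tot {t u : S} (ht : t ∈ Tot S) (hu : u ∈ Tot S) : t * u ∈ Tot S := by
  change plus (t * u) = 1
  rw [lr5, hu, mul_one, ht]

theorem mem_totDown_of_mem_tot {t : S} (ht : t ∈ Tot S) : t ∈ TotDown S :=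
  ⟨t, ht, nle_refl t⟩

theorem proj_mem_totDown {e : S} (he : e ∈ Proj S) : e ∈ TotDown S := by
  have h := nle_plus_mul e (1 : S)
  rw [mul_one, show plus e = e from he] at h
  exact ⟨1, one_mem_tot, h⟩

theorem mul_mem_totDown {a b : S} (ha : a ∈ TotDown S) (hb : b ∈ TotDown S) :
    a * b ∈ TotDown S := by
  obtain ⟨t, ht, hat⟩ := ha
  obtain ⟨u, hu, hbu⟩ := hb
  exact ⟨t * u, mul_mem_tot ht hu, nle_mul hat hbu⟩

end LeftRestrictionMonoid

/-- `S' = Tot(S)↓` contains 1 and all projections, is closed under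
multiplication and under `plus`, and (with the restricted operations, which automatically
satisfy (LR1)–(LR6)) is a factorizable left restriction monoid: every element of `S'` lies
below a total element which itself belongs to `S'`. -/
theorem statement2 (S : Type*) [LeftRestrictionMonoid S] :
    ((1 : S) ∈ TotDown S) ∧
    (∀ e : S, e ∈ Proj S → e ∈ TotDown S) ∧
    (∀ a b : S, a ∈ TotDown S → b ∈ TotDown S → a * b ∈ TotDown S) ∧
    (∀ a : S, a ∈ TotDown S → plus a ∈ TotDown S) ∧
    (∀ a : S, a ∈ TotDown S → ∃ t : S, t ∈ Tot S ∧ t ∈ TotDown S ∧ nle a t) := by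
  refine ⟨mem_totDown_of_mem_tot one_mem_tot, fun _ => proj_mem_totDown,
    fun _ _ => mul_mem_totDown, fun a _ => proj_mem_totDown (plus_mem_proj a), ?_⟩
  rintro a ⟨t, ht, hat⟩
  exact ⟨t, ht, mem_totDown_of_mem_tot ht, hat⟩
end

section
/- Let [E|M] be a matched pair and let S = S[E|M]. Define α : M → Tot(S) by α(a) = (1,[a]₁) and β : E → Proj(S) by β(e) = (e,[1]ₑ). Then α is a bijective monoid homomorphism, β is a bijective semilattice homomorphism preserving the top element, β(m∗e) = α(m)∗β(e) (where the action on Proj(S) is m∗e = (me)⁺), and m ≡ₑ n in M holds if and only if α(m) ≡_{β(e)} α(n) in S (where for totals s, t of S and projection i, s ≡ᵢ t means is = it). Hence (α,β) is an isomorphism of matched pairs [E|M] ≅ [Proj(S)|Tot(S)]. -/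
/-- A matched pair `[E|M]`: a monoid `M`, a meet semilattice `E` with a top element
(meet written as multiplication in the paper, here `⊓`, with top `⊤` playing the role of 1),
a monoid action of `M` on `E` and a right congruence `≡ₑ` on `M` for each `e ∈ E`,
satisfying (MP2), (MP3), (MP5)–(MP8). -/
structure MatchedPair (E M : Type*) [SemilatticeInf E] [OrderTop E] [Monoid M] where
  act : M → E → E
  act_one : ∀ e : E, act 1 e = e
  act_mul : ∀ m n : M, ∀ e : E, act (m * n) e = act m (act n e)
  mp2 : ∀ m : M, act m ⊤ = ⊤
  mp3 : ∀ m : M, ∀ e f : E, act m (e ⊓ f) = act m e ⊓ act m f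
  r : E → M → M → Prop
  requiv : ∀ e : E, Equivalence (r e)
  rcong : ∀ e : E, ∀ m n a : M, r e m n → r e (m * a) (n * a)
  mp5 : ∀ m n : M, r ⊤ m n → m = n
  mp6 : ∀ e f : E, ∀ m n : M, f ≤ e → r e m n → r f m n
  mp7 : ∀ e : E, ∀ m a a' : M, r e a a' → r (act m e) (m * a) (m * a')
  mp8 : ∀ e : E, ∀ a a' : M, ∀ f : E, r e a a' → e ⊓ act a f = e ⊓ act a' f

namespace MatchedPair

variable {E M : Type*} [SemilatticeInf E] [OrderTop E] [Monoid M]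

/-- Representative-level multiplication on pairs `(e, a)`, representing the
multiplication `(e,[a]ₑ)(f,[b]_f) = (e(a∗f), [ab]_{e(a∗f)})` on `S[E|M]`. -/
def mulRep (P : MatchedPair E M) (x y : E × M) : E × M :=
  (x.1 ⊓ P.act x.2 y.1, x.2 * y.2)

/-- Representative-level unary operation `(e,[a]ₑ)⁺ = (e,[1]ₑ)`. -/
def plusRep (x : E × M) : E × M := (x.1, 1)

/-- The relation identifying representatives of the same element of `S[E|M]`:
`(e, a)` and `(f, b)` represent the same element iff `e = f` and `a ≡ₑ b`. -/
def eqvRep (P : MatchedPair E M) (x y : E × M) : Prop :=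
  x.1 = y.1 ∧ P.r x.1 x.2 y.2

/-- Representative-level natural partial order on `S[E|M]`: `x ≤ y` iff `x = x⁺ y`. -/
def nleRep (P : MatchedPair E M) (x y : E × M) : Prop :=
  P.eqvRep x (P.mulRep (plusRep x) y)

end MatchedPair

namespace MatchedPair

variable {E M : Type*} [SemilatticeInf E] [OrderTop E] [Monoid M] (P : MatchedPair E M)

theorem eqvRep_refl (x : E × M) : P.eqvRep x x :=
  ⟨rfl, (P.requiv _).refl _⟩

theorem eqvRep_symm {x y : E × M} (h : P.eqvRep x y) : P.eqvRep y x := by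
  obtain ⟨hfst, hr⟩ := h
  exact ⟨hfst.symm, hfst ▸ (P.requiv _).symm hr⟩

theorem eqvRep_mk_iff (e : E) (a b : M) : P.eqvRep (e, a) (e, b) ↔ P.r e a b :=
  and_iff_right rfl

@[simp]
theorem mulRep_top_left (a b : M) (f : E) : P.mulRep (⊤, a) (f, b) = (P.act a f, a * b) := by
  simp [mulRep]

@[simp]
theorem mulRep_one_left (e f : E) (b : M) : P.mulRep (e, 1) (f, b) = (e ⊓ f, b) := by
  simp [mulRep, P.act_one]

end MatchedPair

open MatchedPair

/-- the maps `α : M → Tot(S[E|M])`, `α(a) = (⊤,[a])`, and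
`β : E → Proj(S[E|M])`, `β(e) = (e,[1]ₑ)`, form an isomorphism of matched pairs
`[E|M] ≅ [Proj(S)|Tot(S)]` (stated at the level of representatives modulo `eqvRep`):
`α` is a bijective monoid homomorphism onto the total elements, `β` is a bijective
semilattice homomorphism onto the projections preserving the top element,
`β(m∗e) = α(m)∗β(e)` where the action on projections is `s∗e = (s e)⁺`, and
`m ≡ₑ n` holds in `M` iff `β(e)α(m) = β(e)α(n)` in `S[E|M]`. -/
theorem statement5 {E M : Type*} [SemilatticeInf E] [OrderTop E] [Monoid M]
    (P : MatchedPair E M) :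
    -- α is a monoid homomorphism landing in the total elements
    (∀ a b : M, P.eqvRep (P.mulRep ((⊤ : E), a) ((⊤ : E), b)) ((⊤ : E), a * b)) ∧
    (∀ a : M, P.eqvRep (plusRep ((⊤ : E), a)) ((⊤ : E), (1 : M))) ∧
    -- α is injective
    (∀ a b : M, P.eqvRep ((⊤ : E), a) ((⊤ : E), b) → a = b) ∧
    -- α is surjective onto the total elements
    (∀ x : E × M, P.eqvRep (plusRep x) ((⊤ : E), (1 : M)) → ∃ a : M, P.eqvRep x ((⊤ : E), a)) ∧
    -- β is a semilattice homomorphism (meet goes to multiplication) preserving top,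
    -- landing in the projections
    (∀ e f : E, P.eqvRep (P.mulRep (e, (1 : M)) (f, (1 : M))) (e ⊓ f, (1 : M))) ∧
    (∀ e : E, P.eqvRep (plusRep (e, (1 : M))) (e, (1 : M))) ∧
    -- β is injective
    (∀ e f : E, P.eqvRep (e, (1 : M)) (f, (1 : M)) → e = f) ∧
    -- β is surjective onto the projections
    (∀ x : E × M, P.eqvRep (plusRep x) x → ∃ e : E, P.eqvRep x (e, (1 : M))) ∧
    -- β intertwines the actions: β (m ∗ e) = (α m · β e)⁺ = α(m) ∗ β(e)
    (∀ m : M, ∀ e : E,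
      P.eqvRep (plusRep (P.mulRep ((⊤ : E), m) (e, (1 : M)))) (P.act m e, (1 : M))) ∧
    -- α and β intertwine the congruences: m ≡ₑ n iff β(e) α(m) = β(e) α(n)
    (∀ e : E, ∀ m n : M, P.r e m n ↔
      P.eqvRep (P.mulRep (e, (1 : M)) ((⊤ : E), m)) (P.mulRep (e, (1 : M)) ((⊤ : E), n))) := by
  refine ⟨fun a b => ?_, fun a => P.eqvRep_refl _, fun a b h => P.mp5 a b h.2,
    fun x h => ⟨x.2, h.1, (P.requiv _).refl _⟩, fun e f => ?_, fun e => P.eqvRep_refl _,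
    fun e f h => h.1, fun x h => ⟨x.1, P.eqvRep_symm h⟩, fun m e => ?_,
    fun e m n => ?_⟩
  · simpa only [mulRep_top_left, P.mp2] using P.eqvRep_refl _
  · simpa only [mulRep_one_left] using P.eqvRep_refl _
  · simpa only [plusRep, mulRep_top_left] using P.eqvRep_refl _
  · simp only [mulRep_one_left, inf_top_eq, eqvRep_mk_iff]
end

section
/- Let S be a left restriction monoid and let (S, Proj(S), id) be the supported action given by s·e = (se)⁺ with the identity support map. Then for any supported action (S,X,q), the support map q : X → Proj(S) is a homomorphism of supported actions, and it is the unique homomorphism of supported actions from (S,X,q) to (S, Proj(S), id). Hence (S, Proj(S), id) is the terminal object in the category of supported actions of S. -/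
open LeftRestrictionMonoid

/-- A supported action of a left restriction monoid `S` on a set `X`: a monoid action
together with a support map `p : X → Proj(S)` satisfying (E1) and (E2). -/
structure SupportedAction (S : Type*) [LeftRestrictionMonoid S] (X : Type*) where
  smul : S → X → X
  one_smul : ∀ x : X, smul 1 x = x
  mul_smul : ∀ s t : S, ∀ x : X, smul (s * t) x = smul s (smul t x)
  p : X → S
  p_proj : ∀ x : X, plus (p x) = p x
  e1 : ∀ x : X, smul (p x) x = x
  e2 : ∀ s : S, ∀ x : X, p (smul s x) = plus (s * p x)

/-- A homomorphism of supported actions: an `S`-equivariant map commuting with supports. -/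
def SupportedAction.IsHom {S X Y : Type*} [LeftRestrictionMonoid S]
    (A : SupportedAction S X) (B : SupportedAction S Y) (θ : X → Y) : Prop :=
  (∀ s : S, ∀ x : X, θ (A.smul s x) = B.smul s (θ x)) ∧ ∀ x : X, B.p (θ x) = A.p x

namespace LeftRestrictionMonoid

variable {S : Type*} [LeftRestrictionMonoid S]

theorem plus_mem_Proj (s : S) : plus s ∈ Proj S := lr1 s

theorem mul_self_of_mem_Proj {e : S} (he : e ∈ Proj S) : e * e = e := by
  nth_rewrite 1 [← he]
  exact lr4 e

variable (S) in
def projAction : SupportedAction S {e : S // e ∈ Proj S} where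
  smul s e := ⟨plus (s * e.1), plus_mem_Proj _⟩
  one_smul e := Subtype.ext <| (congrArg plus (one_mul e.1)).trans e.2
  mul_smul s t e := Subtype.ext <| by rw [mul_assoc]; exact lr5 s (t * e.1)
  p e := e.1
  p_proj e := e.2
  e1 e := Subtype.ext <| (congrArg plus (mul_self_of_mem_Proj e.2)).trans e.2
  e2 _ _ := rfl

theorem projAction_smul_coe (s : S) (e : {e : S // e ∈ Proj S}) :
    ((projAction S).smul s e).1 = plus (s * e.1) := rfl

theorem projAction_p (e : {e : S // e ∈ Proj S}) : (projAction S).p e = e.1 := rfl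

end LeftRestrictionMonoid

namespace SupportedAction

open LeftRestrictionMonoid

variable {S X : Type*} [LeftRestrictionMonoid S] (A : SupportedAction S X)

def supp (x : X) : {e : S // e ∈ Proj S} := ⟨A.p x, A.p_proj x⟩

theorem isHom_supp : A.IsHom (projAction S) A.supp :=
  ⟨fun s x => Subtype.ext (A.e2 s x), fun _ => rfl⟩

theorem eq_supp_of_isHom {θ : X → {e : S // e ∈ Proj S}} (hθ : A.IsHom (projAction S) θ) :
    θ = A.supp :=
  funext fun x => Subtype.ext (hθ.2 x)

end SupportedAction

/-- the supported action of `S` on `Proj(S)` given by `s·e = (s e)⁺` with the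
identity support map is the terminal object in the category of supported actions of `S`:
for any supported action `(S,X,q)` the support map `q` is a homomorphism of supported actions
to it, and it is the unique such homomorphism. -/
theorem statement10 (S : Type*) [LeftRestrictionMonoid S] :
    ∃ T : SupportedAction S {e : S // e ∈ Proj S},
      (∀ s : S, ∀ e : {e : S // e ∈ Proj S}, (T.smul s e).1 = plus (s * e.1)) ∧
      (∀ e : {e : S // e ∈ Proj S}, T.p e = e.1) ∧
      ∀ (X : Type*) (A : SupportedAction S X),
        A.IsHom T (fun x => ⟨A.p x, A.p_proj x⟩) ∧
        ∀ θ : X → {e : S // e ∈ Proj S}, A.IsHom T θ → θ = fun x => ⟨A.p x, A.p_proj x⟩ :=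
  ⟨projAction S, projAction_smul_coe, projAction_p,
    fun _ A => ⟨A.isHom_supp, fun _ => A.eq_supp_of_isHom⟩⟩
end

section
/- Every Boolean left restriction monoid is factorizable: for each element s, the elements s and \overline{s⁺} are right-orthogonal (their plusses multiply to 0), the join ŝ = s ∨ \overline{s⁺} exists, ŝ is a total element, and s ≤ ŝ (indeed s = s⁺ŝ). -/
open LeftRestrictionMonoid

/-- A Boolean left restriction monoid: a left restriction monoid with a zero element which
is a projection, such that (B1) the projections form a Boolean algebra under the natural
partial order (with bottom 0, top 1, meet = multiplication, join `join` and complement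
`compl`), (B2) right-compatible pairs (`a⁺ b = b⁺ a`) have joins in the natural partial
order (given by `join`), and (B3) multiplication distributes over such binary joins on both
sides. -/
class BooleanLeftRestrictionMonoid (S : Type*) extends LeftRestrictionMonoid S where
  zero : S
  zero_proj : plus zero = zero
  zero_mul' : ∀ s : S, zero * s = zero
  mul_zero' : ∀ s : S, s * zero = zero
  zero_ne_one : zero ≠ 1
  join : S → S → S
  compl : S → S
  -- (B2): `join a b` is the least upper bound of right-compatible a, b in the natural order
  join_ub_left : ∀ a b : S, plus a * b = plus b * a → LeftRestrictionMonoid.nle a (join a b)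
  join_ub_right : ∀ a b : S, plus a * b = plus b * a → LeftRestrictionMonoid.nle b (join a b)
  join_least : ∀ a b c : S, plus a * b = plus b * a →
    LeftRestrictionMonoid.nle a c → LeftRestrictionMonoid.nle b c →
    LeftRestrictionMonoid.nle (join a b) c
  -- (B1): the projections form a Boolean algebra
  join_proj : ∀ e f : S, plus e = e → plus f = f → plus (join e f) = join e f
  compl_proj : ∀ e : S, plus e = e → plus (compl e) = compl e
  compl_inf : ∀ e : S, plus e = e → e * compl e = zero
  compl_sup : ∀ e : S, plus e = e → join e (compl e) = 1
  -- (B3): multiplication distributes over binary joins from both sides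
  ldistrib : ∀ a b c : S, plus a * b = plus b * a → c * join a b = join (c * a) (c * b)
  rdistrib : ∀ a b c : S, plus a * b = plus b * a → join a b * c = join (a * c) (b * c)

open BooleanLeftRestrictionMonoid

namespace LeftRestrictionMonoid

variable {S : Type*} [LeftRestrictionMonoid S]

theorem plus_one : plus (1 : S) = 1 := by
  simpa only [mul_one] using lr4 (1 : S)

theorem nle_plus_of_nle {s t : S} (h : nle s t) : nle (plus s) (plus t) := by
  rw [nle, lr1]
  calc plus s = plus (plus s * t) := congrArg plus h
    _ = plus (plus s * plus t) := lr5 _ _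
    _ = plus s * plus t := lr2 s t

theorem eq_one_of_one_nle {t : S} (h : nle 1 t) : t = 1 := by
  rw [nle, plus_one, one_mul] at h
  exact h.symm

end LeftRestrictionMonoid

namespace BooleanLeftRestrictionMonoid

variable {S : Type*} [BooleanLeftRestrictionMonoid S]

theorem plus_mul_eq_zero_of_plus_mul_plus_eq_zero {a b : S} (h : plus a * plus b = zero) :
    plus a * b = zero := by
  rw [← lr4 b, ← mul_assoc, h, zero_mul']

theorem plus_mul_eq_plus_mul_of_plus_mul_plus_eq_zero {a b : S}
    (h : plus a * plus b = zero) : plus a * b = plus b * a := by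
  rw [plus_mul_eq_zero_of_plus_mul_plus_eq_zero h,
    plus_mul_eq_zero_of_plus_mul_plus_eq_zero (lr3 b a ▸ h)]

theorem plus_compl_plus (s : S) : plus (compl (plus s)) = compl (plus s) :=
  compl_proj _ (lr1 s)

theorem plus_mul_plus_compl_plus (s : S) : plus s * plus (compl (plus s)) = zero := by
  rw [plus_compl_plus]
  exact compl_inf _ (lr1 s)

theorem plus_join_compl_plus (s : S) : plus (join s (compl (plus s))) = 1 := by
  have hcompat := plus_mul_eq_plus_mul_of_plus_mul_plus_eq_zero (plus_mul_plus_compl_plus s)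
  have hs := nle_plus_of_nle (join_ub_left s _ hcompat)
  have hc := nle_plus_of_nle (join_ub_right s _ hcompat)
  rw [plus_compl_plus] at hc
  have hcompat_proj : plus (plus s) * compl (plus s) = plus (compl (plus s)) * plus s :=
    plus_mul_eq_plus_mul_of_plus_mul_plus_eq_zero (by rw [lr1]; exact plus_mul_plus_compl_plus s)
  apply eq_one_of_one_nle
  rw [← compl_sup _ (lr1 s)]
  exact join_least _ _ _ hcompat_proj hs hc

end BooleanLeftRestrictionMonoid

/-- every Boolean left restriction monoid is factorizable: for each `s`, the
elements `s` and `\overline{s⁺}` are right-orthogonal (their plusses multiply to 0, and in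
particular they are right-compatible so their join exists), `ŝ = s ∨ \overline{s⁺}` is a
total element, and `s ≤ ŝ` (indeed `s = s⁺ ŝ`). -/
theorem statement15 {S : Type*} [BooleanLeftRestrictionMonoid S] (s : S) :
    -- s and the complement of s⁺ are right-orthogonal: s⁺ (\overline{s⁺})⁺ = 0
    plus s * plus (compl (plus s)) = zero ∧
    -- in particular they are right-compatible, so the join ŝ = s ∨ \overline{s⁺} exists
    plus s * compl (plus s) = plus (compl (plus s)) * s ∧
    -- ŝ is a total element
    join s (compl (plus s)) ∈ Tot S ∧
    -- s ≤ ŝ, indeed s = s⁺ ŝ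
    nle s (join s (compl (plus s))) ∧
    s = plus s * join s (compl (plus s)) := by
  have horth := plus_mul_plus_compl_plus s
  have hcompat := plus_mul_eq_plus_mul_of_plus_mul_plus_eq_zero horth
  have hle := join_ub_left s _ hcompat
  exact ⟨horth, hcompat, plus_join_compl_plus s, hle, hle⟩
end
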